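/- For the heterogeneous Firework Process, suppose there exist a probability measure μ on [0,∞) and a sequence (b_k)_{k∈ℕ} of real numbers such that: μ([k,∞)) − P(R_n ≥ k) ≤ b_k for all k ≥ 0 and all n ≥ 0; the sequence n·(μ([n,∞)) − b_n) converges to a limit strictly greater than m; and b_n → 0 as n → ∞. Then P(V) > 0. -/

import Mathlib

/-!
Fix `m < c < L` and put `α = c / m > 1`. For large `k` every radius has `P(R_i ≥ k) ≥ c / k`, and
`n - i ≤ u_n - u_i ≤ m (n - i)`, so the probability that no `u_i` with `i < n` reaches `u_n` is at
most `∏_{a < j ≤ n} (1 - α / j) ≤ (a / n) ^ α` (Bernoulli's inequality and a telescoping product),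
which is summable in `n`.

Let `G` be the event that the first `N` radii are at least `m`; it has positive probability because
`P(R_i < m) < 1`. On `G` the vertices `u_1, …, u_N` are all reached, and since `{R_i ≥ m}` and
`{R_i < k}` are negatively correlated, `P(G ∩ {u_n unreached}) ≤ P(G) P(u_n unreached)`. Taking
`N` so large that the tail of the series is below `1` gives `P(G \ V) < P(G)`, hence `P(V) > 0`.
-/

open MeasureTheory ProbabilityTheory Filter Finset
open scoped ENNReal Topology

section Measure

variable {Ω : Type*} [MeasurableSpace Ω]

lemma measure_pos_of_measure_inter_compl_lt {μ : Measure Ω} {s t : Set Ω}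
    (h : μ (s ∩ tᶜ) < μ s) : 0 < μ t := by
  refine pos_iff_ne_zero.2 fun ht => h.not_ge ?_
  calc μ s ≤ μ (s ∩ t) + μ (s \ t) := measure_le_inter_add_sdiff μ s t
    _ = μ (s ∩ tᶜ) := by rw [measure_mono_null Set.inter_subset_right ht, zero_add, Set.sdiff_eq]

variable {P : Measure Ω} [IsProbabilityMeasure P]

lemma measure_inter_le_mul_of_compl_subset {A B : Set Ω} (hA : MeasurableSet A)
    (hAB : Aᶜ ⊆ B) : P (A ∩ B) ≤ P A * P B := by
  have hB : P (A ∩ B) + P Aᶜ = P B := by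
    rw [Set.inter_comm, ← Set.inter_eq_right.2 hAB, ← Set.sdiff_eq, measure_inter_add_sdiff _ hA]
  refine (ENNReal.add_le_add_iff_right (measure_ne_top P Aᶜ)).1 ?_
  calc P (A ∩ B) + P Aᶜ = P A * P B + P Aᶜ * P B := by
        rw [hB, ← add_mul, prob_add_prob_compl hA, one_mul]
    _ ≤ P A * P B + P Aᶜ := by gcongr; exact mul_le_of_le_one_right' prob_le_one

lemma measure_preimage_Ici_inter_Iio_le {f : Ω → ℝ} (hf : Measurable f) (s t : ℝ) :
    P (f ⁻¹' (Set.Ici s ∩ Set.Iio t)) ≤ P (f ⁻¹' Set.Ici s) * P (f ⁻¹' Set.Iio t) := by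
  rcases le_or_gt t s with hts | hst
  · simp [Set.Ici_inter_Iio, Set.Ico_eq_empty_of_le hts]
  · exact measure_inter_le_mul_of_compl_subset (hf measurableSet_Ici)
      fun ω (hω : ¬ s ≤ f ω) => (not_le.1 hω).trans hst

lemma measure_preimage_Iio_le_ofReal_one_sub {f : Ω → ℝ} (hf : Measurable f) {x r : ℝ}
    (hr : r ≤ (P (f ⁻¹' Set.Ici x)).toReal) : P (f ⁻¹' Set.Iio x) ≤ ENNReal.ofReal (1 - r) := by
  have hcompl : f ⁻¹' Set.Iio x = (f ⁻¹' Set.Ici x)ᶜ := by ext; simp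
  have hle : (P (f ⁻¹' Set.Ici x)).toReal ≤ 1 := by
    simpa using ENNReal.toReal_mono ENNReal.one_ne_top prob_le_one
  rw [hcompl, prob_compl_eq_one_sub (hf measurableSet_Ici),
    ENNReal.le_ofReal_iff_toReal_le (by simp) (by linarith),
    ENNReal.toReal_sub_of_le prob_le_one ENNReal.one_ne_top, ENNReal.toReal_one]
  linarith

end Measure

lemma eventually_div_le_of_tendsto_mul_sub {ι : Type*} {f b : ℕ → ℝ} {g : ι → ℕ → ℝ}
    (hfg : ∀ k i, f k - g i k ≤ b k) {L c : ℝ}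
    (hL : Tendsto (fun n : ℕ => (n : ℝ) * (f n - b n)) atTop (𝓝 L)) (hcL : c < L) :
    ∀ᶠ k : ℕ in atTop, ∀ i, c / k ≤ g i k := by
  filter_upwards [hL.eventually (eventually_gt_nhds hcL), eventually_gt_atTop 0] with k hk hk0 i
  have hk0' : (0 : ℝ) < k := by exact_mod_cast hk0
  rw [div_le_iff₀ hk0']
  nlinarith [hfg k i]

lemma apply_add_le_add_mul {u : ℕ → ℕ} {m : ℕ} (hu : ∀ n, u (n + 1) - u n ≤ m) (i j : ℕ) :
    u (i + j) ≤ u i + m * j := by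
  induction j with
  | zero => simp
  | succ j ih => have := hu (i + j); rw [← add_assoc, mul_add_one]; omega

lemma prod_range_one_sub_div_le_rpow {α a : ℝ} (hα : 1 ≤ α) (ha : 0 < a) (hαa : α ≤ a + 1)
    (t : ℕ) : ∏ i ∈ range t, (1 - α / (a + t - i)) ≤ (a / (a + t)) ^ α := by
  induction t with
  | zero => simp [div_self ha.ne']
  | succ t ih =>
    have hshift : ∀ i ∈ range t, 1 - α / (a + ↑(t + 1) - ↑(i + 1)) = 1 - α / (a + t - i) := by
      intro i _; push_cast; ring_nf
    have hbern : 1 - α / (a + ↑(t + 1)) ≤ ((a + t) / (a + ↑(t + 1))) ^ α := by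
      push_cast
      have hs : -1 ≤ -1 / (a + t + 1) := by
        rw [le_div_iff₀ (by positivity)]; linarith
      convert one_add_mul_self_le_rpow_one_add hs hα using 2 <;> field_simp <;> ring
    rw [prod_range_succ', prod_congr rfl hshift, Nat.cast_zero, sub_zero]
    have hfac : 0 ≤ 1 - α / (a + ↑(t + 1)) := by
      rw [sub_nonneg, div_le_one (by positivity)]
      push_cast
      linarith [(Nat.cast_nonneg t : (0 : ℝ) ≤ t)]
    refine (mul_le_mul ih hbern hfac (by positivity)).trans_eq ?_
    rw [← Real.mul_rpow (by positivity) (by positivity)]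
    push_cast
    field_simp

lemma summable_div_add_rpow {a α : ℝ} (ha : 0 ≤ a) (hα : 1 < α) :
    Summable fun t : ℕ => (a / (a + t)) ^ α := by
  refine (((Real.summable_one_div_nat_add_rpow a α).2 hα).mul_left (a ^ α)).congr fun t => ?_
  rw [abs_of_nonneg (by positivity), Real.div_rpow ha (by positivity), add_comm (t : ℝ)]
  ring

namespace Firework

variable {Ω : Type*} {R : ℕ → Ω → ℝ} {u : ℕ → ℕ} {m : ℕ}

def survival (R : ℕ → Ω → ℝ) (u : ℕ → ℕ) : Set Ω :=
  ⋂ (n : ℕ) (_ : 1 ≤ n), ⋃ i ∈ range n, {ω | ((u n - u i : ℕ) : ℝ) ≤ R i ω}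

def unreached (R : ℕ → Ω → ℝ) (u : ℕ → ℕ) (n : ℕ) : Set Ω :=
  ⋂ i ∈ range n, R i ⁻¹' Set.Iio ((u n - u i : ℕ) : ℝ)

def longStart (R : ℕ → Ω → ℝ) (m N : ℕ) : Set Ω :=
  ⋂ i ∈ range N, R i ⁻¹' Set.Ici (m : ℝ)

lemma compl_survival : (survival R u)ᶜ = ⋃ (n : ℕ) (_ : 1 ≤ n), unreached R u n := by
  ext ω
  simp [survival, unreached]

lemma longStart_inter_unreached_eq_empty (hustep : ∀ n, u (n + 1) - u n ≤ m) {N n : ℕ}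
    (hn : 1 ≤ n) (hnN : n ≤ N) : longStart R m N ∩ unreached R u n = ∅ := by
  refine Set.eq_empty_of_forall_notMem fun ω ⟨hlong, hgap⟩ => ?_
  obtain ⟨k, rfl⟩ := Nat.exists_eq_add_of_le' hn
  have hlongk : (m : ℝ) ≤ R k ω := Set.mem_iInter₂.1 hlong k (mem_range.2 (by omega))
  have hgapk : R k ω < ((u (k + 1) - u k : ℕ) : ℝ) :=
    Set.mem_iInter₂.1 hgap k (mem_range.2 (by omega))
  have hstep : ((u (k + 1) - u k : ℕ) : ℝ) ≤ m := by exact_mod_cast hustep k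
  linarith

lemma longStart_inter_compl_survival_subset (hustep : ∀ n, u (n + 1) - u n ≤ m) (N : ℕ) :
    longStart R m N ∩ (survival R u)ᶜ ⊆ ⋃ j, longStart R m N ∩ unreached R u (N + 1 + j) := by
  rintro ω ⟨hlong, hsurv⟩
  simp only [compl_survival, Set.mem_iUnion] at hsurv ⊢
  obtain ⟨n, hn, hgap⟩ := hsurv
  have hNn : N + 1 ≤ n := by
    by_contra hnN
    exact (longStart_inter_unreached_eq_empty hustep hn (by omega)).subset ⟨hlong, hgap⟩
  exact ⟨n - (N + 1), hlong, by rwa [Nat.add_sub_cancel' hNn]⟩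

section Independent

variable [MeasurableSpace Ω] {P : Measure Ω}

lemma measure_longStart (hindep : iIndepFun R P) (m N : ℕ) :
    P (longStart R m N) = ∏ i ∈ range N, P (R i ⁻¹' Set.Ici (m : ℝ)) :=
  hindep.meas_biInter fun _ _ => ⟨_, measurableSet_Ici, rfl⟩

variable [IsProbabilityMeasure P]

lemma measure_longStart_ne_zero (hmeas : ∀ i, Measurable (R i)) (hindep : iIndepFun R P)
    (h1 : ∀ n, P {ω | R n ω < (m : ℝ)} < 1) (N : ℕ) : P (longStart R m N) ≠ 0 := by
  rw [measure_longStart hindep, prod_ne_zero_iff]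
  intro i _
  have hcompl : R i ⁻¹' Set.Ici (m : ℝ) = {ω | R i ω < (m : ℝ)}ᶜ := by ext; simp
  rw [hcompl, prob_compl_eq_one_sub (measurableSet_lt (hmeas i) measurable_const)]
  exact (tsub_pos_iff_lt.2 (h1 i)).ne'

lemma measure_longStart_inter_unreached_le (hmeas : ∀ i, Measurable (R i))
    (hindep : iIndepFun R P) {N n : ℕ} (hNn : N ≤ n) :
    P (longStart R m N ∩ unreached R u n) ≤
      P (longStart R m N) * ∏ i ∈ range n, P (R i ⁻¹' Set.Iio ((u n - u i : ℕ) : ℝ)) := by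
  set s : ℕ → Set ℝ := fun i =>
    (if i ∈ range N then Set.Ici (m : ℝ) else Set.univ) ∩ Set.Iio ((u n - u i : ℕ) : ℝ)
  have hs : longStart R m N ∩ unreached R u n = ⋂ i ∈ range n, R i ⁻¹' s i := by
    ext ω
    simp only [longStart, unreached, s, Set.mem_inter_iff, Set.mem_iInter₂, Set.preimage_inter,
      Set.mem_preimage, Set.mem_ite_univ_right, forall_and]
    refine and_congr_left fun _ => ⟨fun h i _ hi => h i hi, fun h i hi => h i ?_ hi⟩
    simp only [mem_range] at hi ⊢
    omega
  have hfactor : ∀ i, P (R i ⁻¹' s i) ≤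
      (if i ∈ range N then P (R i ⁻¹' Set.Ici (m : ℝ)) else 1) *
        P (R i ⁻¹' Set.Iio ((u n - u i : ℕ) : ℝ)) := by
    intro i
    simp only [s]
    split_ifs
    · exact measure_preimage_Ici_inter_Iio_le (hmeas i) _ _
    · rw [Set.univ_inter, one_mul]
  rw [hs, hindep.meas_biInter fun i _ => ⟨s i, ?meas, rfl⟩]
  · calc ∏ i ∈ range n, P (R i ⁻¹' s i)
        ≤ ∏ i ∈ range n, (if i ∈ range N then P (R i ⁻¹' Set.Ici (m : ℝ)) else 1) *
            P (R i ⁻¹' Set.Iio ((u n - u i : ℕ) : ℝ)) := prod_le_prod' fun i _ => hfactor i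
      _ = _ := by
        rw [prod_mul_distrib, prod_ite_mem, inter_eq_right.2 (range_subset_range.2 hNn),
          measure_longStart hindep]
  case meas =>
    simp only [s]
    split_ifs
    exacts [measurableSet_Ici.inter measurableSet_Iio, MeasurableSet.univ.inter measurableSet_Iio]

lemma measure_preimage_Iio_gap_le (hmeas : ∀ i, Measurable (R i)) (humono : StrictMono u)
    (hustep : ∀ n, u (n + 1) - u n ≤ m) {c : ℝ} (hc : 0 ≤ c) {a : ℕ}
    (htail : ∀ k i, a < k → c / k ≤ (P (R i ⁻¹' Set.Ici (k : ℝ))).toReal) {i n : ℕ}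
    (hin : a + i < n) :
    P (R i ⁻¹' Set.Iio ((u n - u i : ℕ) : ℝ)) ≤ ENNReal.ofReal (1 - c / m / ((n : ℝ) - i)) := by
  obtain ⟨d, rfl⟩ : ∃ d, n = i + d := ⟨n - i, by omega⟩
  have hgap_ge : d ≤ u (i + d) - u i := by
    have := humono.add_le_nat d i
    rw [add_comm d i] at this
    omega
  have hgap_le : u (i + d) - u i ≤ m * d := by
    have := apply_add_le_add_mul hustep i d
    omega
  refine (measure_preimage_Iio_le_ofReal_one_sub (hmeas i) (htail _ i (by omega))).trans
    (ENNReal.ofReal_le_ofReal ?_)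
  have hgap_pos : (0 : ℝ) < (u (i + d) - u i : ℕ) := by
    exact_mod_cast (by omega : 0 < u (i + d) - u i)
  rw [Nat.cast_add, add_sub_cancel_left, div_div]
  gcongr
  exact_mod_cast hgap_le

lemma prod_measure_preimage_Iio_gap_le (hmeas : ∀ i, Measurable (R i)) (humono : StrictMono u)
    (hustep : ∀ n, u (n + 1) - u n ≤ m) (hm : 0 < m) {c : ℝ} {a : ℕ} (ha : 0 < a)
    (htail : ∀ k i, a < k → c / k ≤ (P (R i ⁻¹' Set.Ici (k : ℝ))).toReal)
    (hα : 1 ≤ c / m) (hαa : c / m ≤ a + 1) (t : ℕ) :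
    ∏ i ∈ range (a + t), P (R i ⁻¹' Set.Iio ((u (a + t) - u i : ℕ) : ℝ)) ≤
      ENNReal.ofReal ((a / (a + t : ℝ)) ^ (c / m)) := by
  have hc : 0 ≤ c := by
    have := (le_div_iff₀ (Nat.cast_pos.2 hm)).1 hα
    linarith [(Nat.cast_nonneg m : (0 : ℝ) ≤ m)]
  have hfac : ∀ i ∈ range t, 0 ≤ 1 - c / m / (a + t - i : ℝ) := by
    intro i hi
    have hi' : (i : ℝ) + 1 ≤ t := by exact_mod_cast mem_range.1 hi
    rw [sub_nonneg, div_le_one (by linarith)]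
    linarith
  calc ∏ i ∈ range (a + t), P (R i ⁻¹' Set.Iio ((u (a + t) - u i : ℕ) : ℝ))
      ≤ ∏ i ∈ range t, P (R i ⁻¹' Set.Iio ((u (a + t) - u i : ℕ) : ℝ)) :=
        prod_le_prod_of_subset_of_le_one' (range_subset_range.2 (by omega))
          fun _ _ _ => prob_le_one
    _ ≤ ∏ i ∈ range t, ENNReal.ofReal (1 - c / m / (a + t - i : ℝ)) := by
        refine prod_le_prod' fun i hi => ?_
        have := measure_preimage_Iio_gap_le hmeas humono hustep hc htail (i := i) (n := a + t)
          (by simp only [mem_range] at hi; omega)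
        rwa [Nat.cast_add] at this
    _ = ENNReal.ofReal (∏ i ∈ range t, (1 - c / m / (a + t - i))) :=
        (ENNReal.ofReal_prod_of_nonneg hfac).symm
    _ ≤ _ := ENNReal.ofReal_le_ofReal
        (prod_range_one_sub_div_le_rpow hα (Nat.cast_pos.2 ha) hαa t)

lemma measure_survival_pos (hmeas : ∀ i, Measurable (R i)) (hindep : iIndepFun R P)
    (humono : StrictMono u) (hustep : ∀ n, u (n + 1) - u n ≤ m) (hm : 0 < m)
    (h1 : ∀ n, P {ω | R n ω < (m : ℝ)} < 1) {c : ℝ} (hmc : (m : ℝ) < c)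
    (htail : ∀ᶠ k : ℕ in atTop, ∀ i, c / k ≤ (P (R i ⁻¹' Set.Ici (k : ℝ))).toReal) :
    0 < P (survival R u) := by
  have hα : 1 < c / m := (one_lt_div (Nat.cast_pos.2 hm)).2 hmc
  obtain ⟨a, ha, hαa, htail_gt⟩ : ∃ a : ℕ, 0 < a ∧ c / m ≤ a + 1 ∧
      ∀ k i, a < k → c / k ≤ (P (R i ⁻¹' Set.Ici (k : ℝ))).toReal := by
    obtain ⟨K, hK⟩ := eventually_atTop.1 htail
    refine ⟨K + ⌈c / m⌉₊ + 1, by omega, ?_, fun k i hk => hK k (by omega) i⟩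
    push_cast
    linarith [Nat.le_ceil (c / m), (Nat.cast_nonneg K : (0 : ℝ) ≤ K)]
  set g : ℕ → ℝ≥0∞ := fun t => ENNReal.ofReal ((a / (a + t : ℝ)) ^ (c / m))
  have hg : ∑' t, g t ≠ ∞ := by
    rw [← ENNReal.ofReal_tsum_of_nonneg (fun _ => by positivity)
      (summable_div_add_rpow (Nat.cast_nonneg a) hα)]
    exact ENNReal.ofReal_ne_top
  obtain ⟨T, hT⟩ := eventually_atTop.1
    ((ENNReal.tendsto_sum_nat_add g hg).eventually (gt_mem_nhds one_pos))
  set G := longStart R m (a + T)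
  refine measure_pos_of_measure_inter_compl_lt (s := G) ?_
  calc P (G ∩ (survival R u)ᶜ)
        ≤ ∑' j, P (G ∩ unreached R u (a + T + 1 + j)) :=
          (measure_mono (longStart_inter_compl_survival_subset hustep _)).trans
            (measure_iUnion_le _)
    _ ≤ ∑' j, P G * g (j + (T + 1)) := ENNReal.tsum_le_tsum fun j => by
        rw [show a + T + 1 + j = a + (j + (T + 1)) by omega]
        refine (measure_longStart_inter_unreached_le hmeas hindep (by omega)).trans ?_
        gcongr
        exact prod_measure_preimage_Iio_gap_le hmeas humono hustep hm ha htail_gt hα.le hαa _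
    _ = P G * ∑' j, g (j + (T + 1)) := ENNReal.tsum_mul_left
    _ < P G * 1 := ENNReal.mul_lt_mul_right
        (measure_longStart_ne_zero hmeas hindep h1 _) (measure_ne_top _ _)
        (hT _ (by omega))
    _ = P G := mul_one _

end Independent

end Firework

theorem firework_heterogeneous_survival_of_dominating_tail_general
    {Ω : Type*} [MeasurableSpace Ω] (P : Measure Ω) [IsProbabilityMeasure P]
    (m : ℕ) (hm : 1 ≤ m)
    (u : ℕ → ℕ) (humono : StrictMono u)
    (hustep : ∀ n, u (n + 1) - u n ≤ m)
    (R : ℕ → Ω → ℝ)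
    (hmeas : ∀ i, Measurable (R i))
    (hindep : iIndepFun R P)
    (h1 : ∀ n, P {ω | R n ω < (m : ℝ)} < 1)
    (V : Set Ω)
    (hV : V = ⋂ (n : ℕ) (_ : 1 ≤ n), ⋃ i ∈ Finset.range n,
      {ω | ((u n - u i : ℕ) : ℝ) ≤ R i ω})
    (μ : Measure ℝ)
    (b : ℕ → ℝ)
    (hb : ∀ k n : ℕ, (μ (Set.Ici (k : ℝ))).toReal -
      (P {ω | (k : ℝ) ≤ R n ω}).toReal ≤ b k)
    (hlim : ∃ L : ℝ, (m : ℝ) < L ∧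
      Tendsto (fun n : ℕ => (n : ℝ) * ((μ (Set.Ici (n : ℝ))).toReal - b n))
        atTop (nhds L)) :
    0 < P V := by
  obtain ⟨L, hmL, hL⟩ := hlim
  obtain ⟨c, hmc, hcL⟩ := exists_between hmL
  exact hV ▸ Firework.measure_survival_pos hmeas hindep humono hustep hm h1 hmc
    (eventually_div_le_of_tendsto_mul_sub hb hL hcL)

/-- **Heterogeneous Firework Process.** If the tails of the `R_n` are uniformly close
(from below) to the tail of a distribution `μ` on `[0,∞)` with
`lim n·(μ[n,∞) − b_n) > m` and `b_n → 0`, then `P(V) > 0`. -/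
theorem firework_heterogeneous_survival_of_dominating_tail
    {Ω : Type*} [MeasurableSpace Ω] (P : Measure Ω) [IsProbabilityMeasure P]
    (m : ℕ) (hm : 1 ≤ m)
    (u : ℕ → ℕ) (hu0 : u 0 = 0) (humono : StrictMono u)
    (hustep : ∀ n, u (n + 1) - u n ≤ m)
    (R : ℕ → Ω → ℝ)
    (hmeas : ∀ i, Measurable (R i))
    (hnonneg : ∀ i ω, 0 ≤ R i ω)
    (hindep : iIndepFun R P)
    (h0 : ∀ n, 0 < P {ω | R n ω < (m : ℝ)})
    (h1 : ∀ n, P {ω | R n ω < (m : ℝ)} < 1)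
    (V : Set Ω)
    (hV : V = ⋂ (n : ℕ) (_ : 1 ≤ n), ⋃ i ∈ Finset.range n,
      {ω | ((u n - u i : ℕ) : ℝ) ≤ R i ω})
    (μ : Measure ℝ) [IsProbabilityMeasure μ] (hμ : μ {x : ℝ | x < 0} = 0)
    (b : ℕ → ℝ)
    (hb : ∀ k n : ℕ, (μ (Set.Ici (k : ℝ))).toReal -
      (P {ω | (k : ℝ) ≤ R n ω}).toReal ≤ b k)
    (hlim : ∃ L : ℝ, (m : ℝ) < L ∧
      Tendsto (fun n : ℕ => (n : ℝ) * ((μ (Set.Ici (n : ℝ))).toReal - b n))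
        atTop (nhds L))
    (hb0 : Tendsto b atTop (nhds 0)) :
    0 < P V :=
  firework_heterogeneous_survival_of_dominating_tail_general P m hm u humono hustep R hmeas hindep
    h1 V hV μ b hb hlim
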